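/- arXiv:2408.04509 — 7 statements merged into one kernel-verified Lean document; each statement's English description precedes it below -/
import Mathlib

section
/- Let Π be an announcement, R a problem with two distinct outcomes x, y ∈ Π(R), and i an individual with x P_i y. Let φ and φ' be possible mechanisms that agree on all problems except R, with φ(R) = x and φ'(R) = y. If there exists a problem R' ≠ R differing from R only in individual i's preferences such that for all z ∈ X, x P_i z implies x P'_i z, and if φ' is strategy-proof, then φ is not strategy-proof. -/
def strictPref {X : Type} (r : X → X → Prop) (x y : X) : Prop := r x y ∧ ¬ r y x

/-- A mechanism is strategy-proof on the domain `Rs`. -/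
def StrategyProof {I X : Type} (Rs : Set (I → X → X → Prop))
    (φ : (I → X → X → Prop) → X) : Prop :=
  ∀ (i : I) (R R' : I → X → X → Prop), R ∈ Rs → R' ∈ Rs →
    (∀ j : I, j ≠ i → R j = R' j) → R i (φ R) (φ R')

theorem strictPref_of_strictPref_of_rel {X : Type} {r : X → X → Prop} (htrans : Transitive r)
    {x y z : X} (hxy : strictPref r x y) (hyz : r y z) : strictPref r x z :=
  ⟨htrans hxy.1 hyz, fun hzx => hxy.2 (htrans hyz hzx)⟩

theorem stmt2_general {I X : Type}
    (Rs : Set (I → X → X → Prop))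
    (hpref : ∀ R ∈ Rs, ∀ i : I, Transitive (R i) ∧ Total (R i))
    (R : I → X → X → Prop) (hR : R ∈ Rs)
    (x y : X)
    (i : I) (hPi : strictPref (R i) x y)
    (φ φ' : (I → X → X → Prop) → X)
    (hφR : φ R = x) (hφ'R : φ' R = y)
    (hagree : ∀ S : I → X → X → Prop, S ≠ R → φ S = φ' S)
    (hR' : ∃ R' ∈ Rs, R' ≠ R ∧ (∀ j : I, j ≠ i → R' j = R j) ∧
      ∀ z : X, strictPref (R i) x z → strictPref (R' i) x z)
    (hSP' : StrategyProof Rs φ') :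
    ¬ StrategyProof Rs φ := by
  obtain ⟨R', hR'mem, hR'ne, hR'i, hmono⟩ := hR'
  intro hSP
  have hy_le : R i y (φ' R') :=
    hφ'R ▸ hSP' i R R' hR hR'mem fun j hj => (hR'i j hj).symm
  have hx_lt : strictPref (R' i) x (φ' R') :=
    hmono _ (strictPref_of_strictPref_of_rel (hpref R hR i).1 hPi hy_le)
  have hle_x : R' i (φ' R') x := hagree R' hR'ne ▸ hφR ▸ hSP i R' R hR'mem hR hR'i
  exact hx_lt.2 hle_x

theorem stmt2 {I X : Type} [Fintype I] [Fintype X]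
    (Rs : Set (I → X → X → Prop))
    (hpref : ∀ R ∈ Rs, ∀ i : I, Transitive (R i) ∧ Total (R i))
    (Ann : (I → X → X → Prop) → Set X)
    (R : I → X → X → Prop) (hR : R ∈ Rs)
    (x y : X) (hxy : x ≠ y) (hx : x ∈ Ann R) (hy : y ∈ Ann R)
    (i : I) (hPi : strictPref (R i) x y)
    (φ φ' : (I → X → X → Prop) → X)
    (hφ : ∀ S ∈ Rs, φ S ∈ Ann S) (hφ' : ∀ S ∈ Rs, φ' S ∈ Ann S)
    (hφR : φ R = x) (hφ'R : φ' R = y)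
    (hagree : ∀ S : I → X → X → Prop, S ≠ R → φ S = φ' S)
    (hR' : ∃ R' ∈ Rs, R' ≠ R ∧ (∀ j : I, j ≠ i → R' j = R j) ∧
      ∀ z : X, strictPref (R i) x z → strictPref (R' i) x z)
    (hSP' : StrategyProof Rs φ') :
    ¬ StrategyProof Rs φ :=
  stmt2_general Rs hpref R hR x y i hPi φ φ' hφR hφ'R hagree hR' hSP'
end

section
/- In an arbitrary environment with a rich preference domain, at least three outcomes, and no pair of outcomes that all individuals are indifferent between, an announcement Π guarantees strategy-proofness if and only if Π is fully transparent and its unique possible mechanism is strategy-proof. In particular, no opaque announcement guarantees strategy-proofness. -/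
/-- Richness of the preference domain. -/
def Rich {I X : Type} [DecidableEq I] (Rs : Set (I → X → X → Prop)) : Prop :=
  ∀ R ∈ Rs, ∀ (i : I) (x y : X), strictPref (R i) x y →
    ∃ Ri' : X → X → Prop, Ri' ≠ R i ∧ Function.update R i Ri' ∈ Rs ∧
      ∀ z : X, strictPref (R i) x z → strictPref Ri' x z

section Announcement

variable {I X : Type} {Rs : Set (I → X → X → Prop)} {Ann : (I → X → X → Prop) → Set X}

def GuaranteesStrategyProof (Rs : Set (I → X → X → Prop)) (Ann : (I → X → X → Prop) → Set X) :
    Prop :=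
  ∀ φ : (I → X → X → Prop) → X, (∀ R ∈ Rs, φ R ∈ Ann R) → StrategyProof Rs φ

lemma exists_possible_mechanism_eq_eq (hne : ∀ R ∈ Rs, (Ann R).Nonempty)
    {R R' : I → X → X → Prop} (hRR' : R ≠ R') {b a : X} (hb : b ∈ Ann R) (ha : a ∈ Ann R') :
    ∃ φ : (I → X → X → Prop) → X, (∀ S ∈ Rs, φ S ∈ Ann S) ∧ φ R = b ∧ φ R' = a := by
  classical
  let select : (I → X → X → Prop) → X := fun S => if h : (Ann S).Nonempty then h.some else b
  refine ⟨Function.update (Function.update select R' a) R b, fun S hS => ?_,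
    Function.update_self .., by simp [Function.update_of_ne hRR'.symm]⟩
  rcases eq_or_ne S R with rfl | hSR
  · simpa
  rcases eq_or_ne S R' with rfl | hSR'
  · simpa [hSR]
  simpa [hSR, hSR', select, hne S hS] using (hne S hS).some_mem

lemma GuaranteesStrategyProof.pref_of_mem (hG : GuaranteesStrategyProof Rs Ann)
    (hne : ∀ R ∈ Rs, (Ann R).Nonempty) {i : I} {R R' : I → X → X → Prop}
    (hR : R ∈ Rs) (hR' : R' ∈ Rs) (hRR' : R ≠ R') (hagree : ∀ j, j ≠ i → R j = R' j)
    {b a : X} (hb : b ∈ Ann R) (ha : a ∈ Ann R') : R i b a ∧ R' i a b := by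
  obtain ⟨φ, hφ, hφR, hφR'⟩ := exists_possible_mechanism_eq_eq hne hRR' hb ha
  have hSP := hG φ hφ i
  refine ⟨hφR ▸ hφR' ▸ hSP R R' hR hR' hagree, hφR ▸ hφR' ▸ hSP R' R hR' hR ?_⟩
  exact fun j hj => (hagree j hj).symm

lemma GuaranteesStrategyProof.not_strictPref_of_mem [DecidableEq I]
    (hG : GuaranteesStrategyProof Rs Ann) (hne : ∀ R ∈ Rs, (Ann R).Nonempty) (hrich : Rich Rs)
    {R : I → X → X → Prop} (hR : R ∈ Rs) {i : I} (htrans : Transitive (R i))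
    {x y : X} (hx : x ∈ Ann R) (hy : y ∈ Ann R) : ¬ strictPref (R i) x y := by
  intro hxy
  obtain ⟨Ri', hRi', hR', hkeep⟩ := hrich R hR i x y hxy
  obtain ⟨a, ha⟩ := hne _ hR'
  have hRR' : R ≠ Function.update R i Ri' := (Function.update_ne_self_iff.mpr hRi').symm
  have hagree : ∀ j, j ≠ i → R j = Function.update R i Ri' j :=
    fun j hj => (Function.update_of_ne hj ..).symm
  have hya : R i y a := (hG.pref_of_mem hne hR hR' hRR' hagree hy ha).1
  obtain ⟨hxa, hax'⟩ := hG.pref_of_mem hne hR hR' hRR' hagree hx ha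
  rw [Function.update_self] at hax'
  have hax : R i a x := by
    by_contra hnax
    exact (hkeep a ⟨hxa, hnax⟩).2 hax'
  exact hxy.2 (htrans hya hax)

lemma GuaranteesStrategyProof.transparent [DecidableEq I] (hG : GuaranteesStrategyProof Rs Ann)
    (hne : ∀ R ∈ Rs, (Ann R).Nonempty) (hrich : Rich Rs)
    (htrans : ∀ R ∈ Rs, ∀ i : I, Transitive (R i))
    (hnoindiff : ∀ R ∈ Rs, ∀ x y : X, x ≠ y →
      ∃ i : I, strictPref (R i) x y ∨ strictPref (R i) y x) :
    ∀ R ∈ Rs, ∃ x : X, Ann R = {x} := by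
  intro R hR
  refine Set.exists_eq_singleton_iff_nonempty_subsingleton.mpr ⟨hne R hR, fun x hx y hy => ?_⟩
  by_contra hxy
  obtain ⟨i, hi | hi⟩ := hnoindiff R hR x y hxy
  · exact hG.not_strictPref_of_mem hne hrich hR (htrans R hR i) hx hy hi
  · exact hG.not_strictPref_of_mem hne hrich hR (htrans R hR i) hy hx hi

end Announcement

theorem stmt3_general {I X : Type} [DecidableEq I]
    (Rs : Set (I → X → X → Prop))
    (hrich : Rich Rs)
    (hpref : ∀ R ∈ Rs, ∀ i : I, Transitive (R i) ∧ Total (R i))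
    (hnoindiff : ∀ R ∈ Rs, ∀ x y : X, x ≠ y →
      ∃ i : I, strictPref (R i) x y ∨ strictPref (R i) y x)
    (Ann : (I → X → X → Prop) → Set X)
    (hne : ∀ R ∈ Rs, (Ann R).Nonempty) :
    ((∀ φ : (I → X → X → Prop) → X, (∀ R ∈ Rs, φ R ∈ Ann R) → StrategyProof Rs φ) ↔
      ((∀ R ∈ Rs, ∃ x : X, Ann R = {x}) ∧
        ∀ φ : (I → X → X → Prop) → X, (∀ R ∈ Rs, φ R ∈ Ann R) → StrategyProof Rs φ)) ∧
    ((¬ ∀ R ∈ Rs, ∃ x : X, Ann R = {x}) →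
      ∃ φ : (I → X → X → Prop) → X, (∀ R ∈ Rs, φ R ∈ Ann R) ∧ ¬ StrategyProof Rs φ) := by
  have transparent (hG : GuaranteesStrategyProof Rs Ann) : ∀ R ∈ Rs, ∃ x : X, Ann R = {x} :=
    hG.transparent hne hrich (fun R hR i => (hpref R hR i).1) hnoindiff
  refine ⟨⟨fun hG => ⟨transparent hG, hG⟩, And.right⟩, fun hopaque => ?_⟩
  by_contra! hG
  exact hopaque (transparent hG)

/-- an announcement guarantees strategy-proofness iff it is fully
transparent and its unique possible mechanism is strategy-proof; in particular,
no opaque announcement guarantees strategy-proofness. -/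
theorem stmt3 {I X : Type} [DecidableEq I] [Fintype I] [Fintype X]
    (hX : 3 ≤ Fintype.card X)
    (Rs : Set (I → X → X → Prop))
    (hrich : Rich Rs)
    (hpref : ∀ R ∈ Rs, ∀ i : I, Transitive (R i) ∧ Total (R i))
    (hnoindiff : ∀ R ∈ Rs, ∀ x y : X, x ≠ y →
      ∃ i : I, strictPref (R i) x y ∨ strictPref (R i) y x)
    (Ann : (I → X → X → Prop) → Set X)
    (hne : ∀ R ∈ Rs, (Ann R).Nonempty) :
    ((∀ φ : (I → X → X → Prop) → X, (∀ R ∈ Rs, φ R ∈ Ann R) → StrategyProof Rs φ) ↔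
      ((∀ R ∈ Rs, ∃ x : X, Ann R = {x}) ∧
        ∀ φ : (I → X → X → Prop) → X, (∀ R ∈ Rs, φ R ∈ Ann R) → StrategyProof Rs φ)) ∧
    ((¬ ∀ R ∈ Rs, ∃ x : X, Ann R = {x}) →
      ∃ φ : (I → X → X → Prop) → X, (∀ R ∈ Rs, φ R ∈ Ann R) ∧ ¬ StrategyProof Rs φ) :=
  stmt3_general Rs hrich hpref hnoindiff Ann hne
end

section
/- In the single-individual environment with strict preferences over X = {x_1, …, x_N} (N ≥ 3), define for each strict ranking P ≠ P̄ (where P̄ ranks x_1 P̄ x_2 P̄ … P̄ x_N) the set X(P) of outcomes whose rank strictly improves under P relative to P̄, and let x(P) be the P-highest-ranked element of X(P). Then the announcement Π with Π(P̄) = {x_{N-1}, x_N} and Π(P) = {x(P)} for P ≠ P̄ is opaque and guarantees weak Maskin monotonicity. -/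
/-- A strict linear order (strict total order) on `X`. -/
def SLO {X : Type} (P : X → X → Prop) : Prop :=
  (∀ x y : X, x ≠ y → P x y ∨ P y x) ∧ Transitive P ∧ Irreflexive P

/-- The reference ranking `P̄`: `x_1 P̄ x_2 P̄ … P̄ x_N` (0-indexed: smaller index preferred). -/
def Pbar {N : ℕ} : Fin N → Fin N → Prop := fun a b => a < b

/-- The rank of `x` under `P`: the number of outcomes strictly preferred to `x`. -/
noncomputable def rankOf {N : ℕ} (P : Fin N → Fin N → Prop) (x : Fin N) : ℕ :=
  Nat.card {y : Fin N // P y x}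

/-- `x` strictly improves its rank under `P` relative to `P̄`. -/
def improves {N : ℕ} (P : Fin N → Fin N → Prop) (x : Fin N) : Prop :=
  rankOf P x < rankOf (Pbar (N := N)) x

/-- `z` is `x(P)`: the `P`-most-preferred outcome among those whose rank improved. -/
def topImproved {N : ℕ} (P : Fin N → Fin N → Prop) (z : Fin N) : Prop :=
  improves P z ∧ ∀ w : Fin N, improves P w → ¬ P w z

/-- The announcement: `{x_{N-1}, x_N}` at `P̄` (here `a, b`), and `{x(P)}` otherwise. -/
def Ann6 {N : ℕ} (a b : Fin N) (P : Fin N → Fin N → Prop) : Set (Fin N) :=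
  if P = Pbar then {a, b} else {z | topImproved P z}

/-!
A monotonic transformation at `z` can only lower the rank of `z`, so an outcome that improved its
rank under `P` still does under `P'`. Hence if `φ P' ≠ φ P` were `P'`-below `φ P`, the improving
outcome `φ P` would beat `x(P') = φ P'`. The only escape is `P = P̄`, where `φ P` need not improve;
but it is one of the two `P̄`-worst outcomes, so an outcome `P'`-below it has rank `N - 1` under `P'`
and cannot be `x(P')`.
-/

section Rank

variable {N : ℕ} {P P' : Fin N → Fin N → Prop}

lemma rankOf_eq_ncard (P : Fin N → Fin N → Prop) (x : Fin N) :
    rankOf P x = {y | P y x}.ncard :=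
  (Nat.card_coe_set_eq _).symm

lemma rankOf_Pbar (x : Fin N) : rankOf Pbar x = x.val := by
  simp [rankOf, Pbar, Nat.card_eq_fintype_card, Fintype.card_subtype, Finset.filter_gt_eq_Iio]

lemma SLO_Pbar : SLO (Pbar (N := N)) :=
  ⟨fun _ _ h => lt_or_gt_of_ne h, fun _ _ _ => lt_trans, lt_irrefl⟩

lemma rankOf_lt_rankOf (hP : SLO P) {x y : Fin N} (h : P x y) : rankOf P x < rankOf P y := by
  rw [rankOf_eq_ncard, rankOf_eq_ncard]
  exact Set.ncard_lt_ncard ⟨fun w hw => hP.2.1 hw h, fun hsub => hP.2.2 x (hsub h)⟩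
    (Set.toFinite _)

lemma rankOf_add_ncard_above_add_one (hP : SLO P) (x : Fin N) :
    rankOf P x + {y | P x y}.ncard + 1 = N := by
  obtain ⟨htot, htr, hirr⟩ := hP
  have hbelow : {y | P y x} = (insert x {y | P x y})ᶜ := by
    ext y
    simp only [Set.mem_ofPred_eq, Set.mem_compl_iff, Set.mem_insert_iff, not_or]
    refine ⟨fun h => ⟨fun he => hirr x (he ▸ h), fun h' => hirr x (htr h' h)⟩, ?_⟩
    rintro ⟨hne, hnot⟩
    exact (htot y x hne).resolve_right hnot
  have h := Set.ncard_add_ncard_compl (insert x {y | P x y})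
  rw [Set.ncard_insert_of_notMem (s := {y | P x y}) (hirr x) (Set.toFinite _)] at h
  rw [rankOf_eq_ncard, hbelow]
  simp only [Nat.card_eq_fintype_card, Fintype.card_fin] at h
  omega

lemma rankOf_le_of_monotonic (hP : SLO P) (hP' : SLO P') {x : Fin N}
    (hmono : ∀ y, P x y → P' x y) : rankOf P' x ≤ rankOf P x := by
  have := rankOf_add_ncard_above_add_one hP x
  have := rankOf_add_ncard_above_add_one hP' x
  have := Set.ncard_le_ncard (s := {y | P x y}) (t := {y | P' x y}) hmono (Set.toFinite _)
  omega

lemma not_improves_Pbar (x : Fin N) : ¬ improves Pbar x :=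
  lt_irrefl _

lemma improves.of_monotonic (hP : SLO P) (hP' : SLO P') {x : Fin N}
    (hmono : ∀ y, P x y → P' x y) (h : improves P x) : improves P' x :=
  (rankOf_le_of_monotonic hP hP' hmono).trans_lt h

end Rank

section Announcement

variable {N : ℕ} {a b : Fin N} {P : Fin N → Fin N → Prop}

lemma Ann6_Pbar : Ann6 a b Pbar = {a, b} :=
  if_pos rfl

lemma mem_Ann6_of_ne_Pbar (h : P ≠ Pbar) {z : Fin N} : z ∈ Ann6 a b P ↔ topImproved P z := by
  rw [Ann6, if_neg h]
  rfl

lemma not_subsingleton_Ann6_Pbar (hab : a ≠ b) : ¬ (Ann6 a b Pbar).Subsingleton := by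
  rw [Ann6_Pbar]
  exact fun h => hab (h (Set.mem_insert a _) (Set.mem_insert_of_mem a rfl))

theorem weakMaskinMonotonic_of_mem_Ann6 (ha : N - 2 ≤ a.val) (hb : N - 2 ≤ b.val)
    {φ : (Fin N → Fin N → Prop) → Fin N} (hφ : ∀ P, SLO P → φ P ∈ Ann6 a b P)
    {P P' : Fin N → Fin N → Prop} (hP : SLO P) (hP' : SLO P')
    (hmono : ∀ y, P (φ P) y → P' (φ P) y) : φ P' = φ P ∨ P' (φ P') (φ P) := by
  have hφP_improves (hPbar : P ≠ Pbar) : improves P' (φ P) :=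
    ((mem_Ann6_of_ne_Pbar hPbar).1 (hφ P hP)).1.of_monotonic hP hP' hmono
  by_cases hP'bar : P' = Pbar
  · subst hP'bar
    by_cases hPbar : P = Pbar
    · exact .inl (by rw [hPbar])
    · exact absurd (hφP_improves hPbar) (not_improves_Pbar _)
  rw [or_iff_not_imp_left]
  intro hne
  obtain ⟨himp', htop'⟩ := (mem_Ann6_of_ne_Pbar hP'bar).1 (hφ P' hP')
  by_contra hnot
  have hzz' : P' (φ P) (φ P') := (hP'.1 _ _ (Ne.symm hne)).resolve_right hnot
  by_cases himp : improves P' (φ P)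
  · exact htop' _ himp hzz'
  obtain rfl : P = Pbar := by_contra fun hPbar => himp (hφP_improves hPbar)
  have hz : N - 2 ≤ (φ Pbar).val := by
    have := hφ Pbar SLO_Pbar
    rw [Ann6_Pbar] at this
    rcases this with h | h <;> rw [h] <;> assumption
  have hlt := rankOf_lt_rankOf hP' hzz'
  unfold improves at himp himp'
  rw [rankOf_Pbar] at himp himp'
  have := (φ P').isLt
  omega

end Announcement

/-- the announcement `Π` (with `Π(P̄) = {x_{N-1}, x_N}` and
`Π(P) = {x(P)}` for `P ≠ P̄`) is opaque and guarantees weak Maskin monotonicity. -/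
theorem stmt6 {N : ℕ} (hN : 3 ≤ N) :
    (∃ P : Fin N → Fin N → Prop, SLO P ∧
      ¬ (Ann6 (⟨N - 2, by omega⟩ : Fin N) (⟨N - 1, by omega⟩ : Fin N) P).Subsingleton) ∧
    (∀ φ : (Fin N → Fin N → Prop) → Fin N,
      (∀ P : Fin N → Fin N → Prop, SLO P →
        φ P ∈ Ann6 (⟨N - 2, by omega⟩ : Fin N) (⟨N - 1, by omega⟩ : Fin N) P) →
      -- weak Maskin monotonicity of φ on the domain of strict linear orders
      ∀ P P' : Fin N → Fin N → Prop, SLO P → SLO P' →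
        (∀ y : Fin N, P (φ P) y → P' (φ P) y) →
        (φ P' = φ P ∨ P' (φ P') (φ P))) :=
  ⟨⟨Pbar, SLO_Pbar, not_subsingleton_Ann6_Pbar (by simp [Fin.ext_iff]; omega)⟩,
    fun _ hφ _ _ hP hP' hmono =>
      weakMaskinMonotonic_of_mem_Ann6 le_rfl (by dsimp only; omega) hφ hP hP' hmono⟩
end

section
/- In the single-individual setting with strict preferences: if P ≠ P̄ and P' ≠ P̄ and P' is a monotonic transformation of P at x(P), then x(P) ∈ X(P') and x(P') is weakly P'-preferred to x(P). -/
/-! A monotonic transformation at `z` keeps everything `z` beat below `z`, so (by totality of `P`)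
it can only remove outcomes from above `z`: the rank of `z` does not worsen and `z` stays in
`X(P')`. Then `x(P')`, being unbeaten in `X(P')`, is either `z` or above it. -/

def MonotoneTransformAt {X : Type} (P P' : X → X → Prop) (z : X) : Prop :=
  ∀ y, P z y → P' z y

lemma SLO.asymm {X : Type} {P : X → X → Prop} (hP : SLO P) {a b : X} (hab : P a b) : ¬ P b a :=
  fun hba => hP.2.2 a (hP.2.1 hab hba)

lemma MonotoneTransformAt.rel_of_rel {X : Type} {P P' : X → X → Prop} {z y : X}
    (htot : ∀ x y : X, x ≠ y → P x y ∨ P y x) (hasymm' : ∀ a b : X, P' a b → ¬ P' b a)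
    (hmt : MonotoneTransformAt P P' z) (hy : P' y z) : P y z := by
  have hyz : y ≠ z := by
    rintro rfl
    exact hasymm' y y hy hy
  exact (htot y z hyz).resolve_right fun hzy => hasymm' y z hy (hmt y hzy)

lemma rankOf_le_rankOf {N : ℕ} {P P' : Fin N → Fin N → Prop} {x : Fin N}
    (h : ∀ y, P' y x → P y x) : rankOf P' x ≤ rankOf P x :=
  Nat.card_le_card_of_injective _ (Subtype.impEmbedding _ _ h).injective

lemma topImproved.eq_or_rel {N : ℕ} {P : Fin N → Fin N → Prop} {w z : Fin N}
    (htot : ∀ x y : Fin N, x ≠ y → P x y ∨ P y x) (hw : topImproved P w) (hz : improves P z) :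
    w = z ∨ P w z := by
  by_cases hwz : w = z
  · exact Or.inl hwz
  · exact Or.inr ((htot w z hwz).resolve_right (hw.2 z hz))

theorem stmt9_general {N : ℕ} (P P' : Fin N → Fin N → Prop) (hP : SLO P) (hP' : SLO P')
    (z : Fin N) (hz : topImproved P z)
    (hmt : ∀ y : Fin N, P z y → P' z y) :
    improves P' z ∧ ∀ w : Fin N, topImproved P' w → (w = z ∨ P' w z) := by
  have habove : ∀ y, P' y z → P y z := fun _ =>
    MonotoneTransformAt.rel_of_rel hP.1 (fun _ _ hab => hP'.asymm hab) hmt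
  have himp : improves P' z := (rankOf_le_rankOf habove).trans_lt hz.1
  exact ⟨himp, fun _ hw => hw.eq_or_rel hP'.1 himp⟩

/-- if `P, P' ≠ P̄` and `P'` is a monotonic transformation of `P` at
`x(P)`, then `x(P) ∈ X(P')` and `x(P')` is weakly `P'`-preferred to `x(P)`. -/
theorem stmt9 {N : ℕ} (P P' : Fin N → Fin N → Prop) (hP : SLO P) (hP' : SLO P')
    (hPne : P ≠ Pbar) (hP'ne : P' ≠ Pbar)
    (z : Fin N) (hz : topImproved P z)
    (hmt : ∀ y : Fin N, P z y → P' z y) :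
    improves P' z ∧ ∀ w : Fin N, topImproved P' w → (w = z ∨ P' w z) :=
  stmt9_general P P' hP hP' z hz hmt
end

section
/- In the single-individual setting with strict preferences: for any P' ≠ P̄, the reference ranking P̄ is not a monotonic transformation of P' at the outcome x(P'). -/
theorem rel_of_monotonicTransformation_at {X : Type} {P Q : X → X → Prop}
    (hP : ∀ x y : X, x ≠ y → P x y ∨ P y x) (hQ : ∀ x y : X, Q x y → ¬ Q y x) {z : X}
    (hmono : ∀ y, P z y → Q z y) {y : X} (hyz : Q y z) : P y z := by
  have hne : y ≠ z := fun h => hQ y z hyz (h ▸ hyz)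
  exact (hP y z hne).resolve_right fun hzy => hQ y z hyz (hmono y hzy)

theorem rankOf_le_rankOf_of_imp {N : ℕ} {P Q : Fin N → Fin N → Prop} {z : Fin N}
    (h : ∀ y, Q y z → P y z) : rankOf Q z ≤ rankOf P z :=
  Nat.card_le_card_of_injective _ (Subtype.impEmbedding _ _ h).injective

theorem stmt10_general {N : ℕ} (P' : Fin N → Fin N → Prop) (hP' : SLO P')
    (z : Fin N) (hz : topImproved P' z) :
    ¬ ∀ y : Fin N, P' z y → Pbar z y := by
  intro hmono
  have hrank : rankOf Pbar z ≤ rankOf P' z :=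
    rankOf_le_rankOf_of_imp fun _ =>
      rel_of_monotonicTransformation_at hP'.1 (fun a b (h : a < b) => lt_asymm h) hmono
  exact hrank.not_gt hz.1

/-- for `P' ≠ P̄`, the ranking `P̄` is not a monotonic
transformation of `P'` at `x(P')`. -/
theorem stmt10 {N : ℕ} (P' : Fin N → Fin N → Prop) (hP' : SLO P') (hne : P' ≠ Pbar)
    (z : Fin N) (hz : topImproved P' z) :
    ¬ ∀ y : Fin N, P' z y → Pbar z y :=
  stmt10_general P' hP' z hz
end

section
/- In any environment satisfying the condition of the previous statement (two outcomes x, y strictly ranked by every individual at every problem) with |𝓡| ≥ 1, there exists an opaque announcement that guarantees non-bossiness, namely Π(R) = {x, y} for all R. -/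
/-- Non-bossiness: if a change in `i`'s report matters (strictly) to some `j ≠ i`,
then it matters (strictly) to `i` as well. -/
def NonBossy {I X : Type} (Rs : Set (I → X → X → Prop))
    (φ : (I → X → X → Prop) → X) : Prop :=
  ∀ (i : I) (R R' : I → X → X → Prop), R ∈ Rs → R' ∈ Rs →
    (∀ j : I, j ≠ i → R j = R' j) →
    (∃ j : I, j ≠ i ∧
      (strictPref (R j) (φ R) (φ R') ∨ strictPref (R j) (φ R') (φ R))) →
    (strictPref (R i) (φ R) (φ R') ∨ strictPref (R i) (φ R') (φ R))

/-! Once the outcome can only be `x` or `y`, any change of outcome is a swap between `x` and `y`,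
which every agent — in particular the one who changed the report — strictly cares about. -/

theorem not_strictPref_self {X : Type} (r : X → X → Prop) (a : X) : ¬ strictPref r a a :=
  fun h => h.2 h.1

theorem ne_of_strictPref_or {X : Type} {r : X → X → Prop} {a b : X}
    (h : strictPref r a b ∨ strictPref r b a) : a ≠ b := by
  rintro rfl
  exact h.elim (not_strictPref_self r a) (not_strictPref_self r a)

theorem strictPref_or_of_mem_pair {X : Type} {r : X → X → Prop} {x y a b : X}
    (hr : strictPref r x y ∨ strictPref r y x) (ha : a ∈ ({x, y} : Set X))
    (hb : b ∈ ({x, y} : Set X)) (hab : a ≠ b) :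
    strictPref r a b ∨ strictPref r b a := by
  rcases ha with rfl | rfl <;> rcases hb with rfl | rfl
  · exact absurd rfl hab
  · exact hr
  · exact hr.symm
  · exact absurd rfl hab

theorem nonBossy_of_strictPref_or_of_ne {I X : Type} {Rs : Set (I → X → X → Prop)}
    {φ : (I → X → X → Prop) → X}
    (h : ∀ i, ∀ R ∈ Rs, ∀ R' ∈ Rs, φ R ≠ φ R' →
      strictPref (R i) (φ R) (φ R') ∨ strictPref (R i) (φ R') (φ R)) :
    NonBossy Rs φ := by
  rintro i R R' hR hR' - ⟨j, -, hj⟩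
  exact h i R hR R' hR' (ne_of_strictPref_or hj)

theorem nonBossy_of_mem_pair {I X : Type} {Rs : Set (I → X → X → Prop)} {x y : X}
    (hranked : ∀ R ∈ Rs, ∀ i : I, strictPref (R i) x y ∨ strictPref (R i) y x)
    {φ : (I → X → X → Prop) → X} (hφ : ∀ R ∈ Rs, φ R ∈ ({x, y} : Set X)) :
    NonBossy Rs φ :=
  nonBossy_of_strictPref_or_of_ne fun i R hR R' hR' hne =>
    strictPref_or_of_mem_pair (hranked R hR i) (hφ R hR) (hφ R' hR') hne

/-- in such an environment there exists an opaque announcement that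
guarantees non-bossiness, namely `Π(R) = {x, y}` for all `R`. -/
theorem stmt14 {I X : Type} (Rs : Set (I → X → X → Prop)) (hRs : Rs.Nonempty)
    (x y : X) (hxy : x ≠ y)
    (hranked : ∀ R ∈ Rs, ∀ i : I, strictPref (R i) x y ∨ strictPref (R i) y x) :
    ∃ Ann : (I → X → X → Prop) → Set X,
      (∀ R ∈ Rs, (Ann R).Nonempty) ∧
      (∃ R ∈ Rs, ¬ (Ann R).Subsingleton) ∧
      (∀ φ : (I → X → X → Prop) → X, (∀ R ∈ Rs, φ R ∈ Ann R) → NonBossy Rs φ) := by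
  obtain ⟨R₀, hR₀⟩ := hRs
  refine ⟨fun _ => {x, y}, fun _ _ => Set.insert_nonempty x {y}, ⟨R₀, hR₀, ?_⟩,
    fun φ hφ => nonBossy_of_mem_pair hranked hφ⟩
  exact (Set.nontrivial_pair hxy).not_subsingleton
end

section
/- If an announcement Π guarantees strategy-proofness and 𝓡 is rich with no pair of outcomes indifferent for all individuals, then for every problem R and every pair of distinct outcomes x, y ∈ Π(R), every pair of possible mechanisms agreeing outside R cannot both be strategy-proof when one picks x and the other picks y at R; hence Π(R) is a singleton for all R. -/
/-! If agent `i` strictly prefers `φ R` to `φ' R`, richness lets `i` switch to a preference `Rᵢ'`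
that keeps every outcome below `φ R` strictly below it. At the new profile both mechanisms pick
the same `z`. Strategy-proofness of `φ` in both directions gives `φ R ≿ᵢ z` and `z ≿ᵢ' φ R`, so `z`
cannot lie strictly below `φ R`, i.e. `z ≿ᵢ φ R`; strategy-proofness of `φ'` gives `φ' R ≿ᵢ z`, and
transitivity yields `φ' R ≿ᵢ φ R`, a contradiction. Hence two strategy-proof mechanisms agreeing
off `R` agree at `R`, and any two points of `Π(R)` can be realised as such a pair of possible
mechanisms. -/

section StrategyProof

variable {I X : Type} [DecidableEq I] {Rs : Set (I → X → X → Prop)}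
  {φ φ' : (I → X → X → Prop) → X} {R : I → X → X → Prop} {i : I} {Ri' : X → X → Prop}

theorem StrategyProof.apply_le_apply_update (hφ : StrategyProof Rs φ) (hR : R ∈ Rs)
    (hR' : Function.update R i Ri' ∈ Rs) : R i (φ R) (φ (Function.update R i Ri')) :=
  hφ i R _ hR hR' fun _ hj => (Function.update_of_ne hj _ _).symm

theorem StrategyProof.apply_update_le_apply (hφ : StrategyProof Rs φ) (hR : R ∈ Rs)
    (hR' : Function.update R i Ri' ∈ Rs) : Ri' (φ (Function.update R i Ri')) (φ R) := by
  simpa using hφ i _ R hR' hR fun _ hj => Function.update_of_ne hj _ _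

theorem not_strictPref_of_strategyProof (hrich : Rich Rs) (hR : R ∈ Rs)
    (htrans : Transitive (R i)) (hagree : ∀ S ∈ Rs, S ≠ R → φ S = φ' S)
    (hφ : StrategyProof Rs φ) (hφ' : StrategyProof Rs φ') :
    ¬ strictPref (R i) (φ R) (φ' R) := by
  intro hpref
  obtain ⟨Ri', hne, hR', hkeep⟩ := hrich R hR i _ _ hpref
  set z := φ (Function.update R i Ri')
  have hz : φ' (Function.update R i Ri') = z :=
    (hagree _ hR' (mt Function.update_eq_self_iff.mp hne)).symm
  have hz_ge : R i z (φ R) := by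
    by_contra hlt
    exact (hkeep z ⟨hφ.apply_le_apply_update hR hR', hlt⟩).2
      (hφ.apply_update_le_apply hR hR')
  have hφ'_ge : R i (φ' R) z := hz ▸ hφ'.apply_le_apply_update hR hR'
  exact hpref.2 (htrans hφ'_ge hz_ge)

theorem apply_eq_of_strategyProof (hrich : Rich Rs) (hR : R ∈ Rs)
    (htrans : ∀ i, Transitive (R i))
    (hnoindiff : ∀ x y : X, x ≠ y → ∃ i : I, strictPref (R i) x y ∨ strictPref (R i) y x)
    (hagree : ∀ S ∈ Rs, S ≠ R → φ S = φ' S)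
    (hφ : StrategyProof Rs φ) (hφ' : StrategyProof Rs φ') : φ R = φ' R := by
  by_contra hne
  obtain ⟨i, hi | hi⟩ := hnoindiff _ _ hne
  · exact not_strictPref_of_strategyProof hrich hR (htrans i) hagree hφ hφ' hi
  · exact not_strictPref_of_strategyProof hrich hR (htrans i)
      (fun S hS hSR => (hagree S hS hSR).symm) hφ' hφ hi

end StrategyProof

section Announcement

variable {Ω X : Type} {Rs : Set Ω} {Ann : Ω → Set X}

theorem exists_forall_mem_announcement [Nonempty X] (hne : ∀ R ∈ Rs, (Ann R).Nonempty) :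
    ∃ ψ : Ω → X, ∀ R ∈ Rs, ψ R ∈ Ann R :=
  ⟨fun R => Classical.epsilon (· ∈ Ann R), fun R hR => Classical.epsilon_spec (hne R hR)⟩

theorem forall_mem_announcement_update [DecidableEq Ω] {ψ : Ω → X}
    (hψ : ∀ S ∈ Rs, ψ S ∈ Ann S) {R : Ω} {x : X} (hx : x ∈ Ann R) :
    ∀ S ∈ Rs, Function.update ψ R x S ∈ Ann S := by
  intro S hS
  by_cases hSR : S = R
  · subst hSR; simpa using hx
  · simpa [Function.update_of_ne hSR] using hψ S hS

end Announcement

theorem stmt17_general {I X : Type} [DecidableEq I]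
    (Rs : Set (I → X → X → Prop))
    (hrich : Rich Rs)
    (hpref : ∀ R ∈ Rs, ∀ i : I, Transitive (R i) ∧ Total (R i))
    (hnoindiff : ∀ R ∈ Rs, ∀ x y : X, x ≠ y →
      ∃ i : I, strictPref (R i) x y ∨ strictPref (R i) y x)
    (Ann : (I → X → X → Prop) → Set X)
    (hne : ∀ R ∈ Rs, (Ann R).Nonempty)
    (hguar : ∀ φ : (I → X → X → Prop) → X,
      (∀ R ∈ Rs, φ R ∈ Ann R) → StrategyProof Rs φ) :
    (∀ R ∈ Rs, ∀ x y : X, x ∈ Ann R → y ∈ Ann R → x ≠ y →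
      ∀ φ φ' : (I → X → X → Prop) → X,
        (∀ S ∈ Rs, φ S ∈ Ann S) → (∀ S ∈ Rs, φ' S ∈ Ann S) →
        (∀ S ∈ Rs, S ≠ R → φ S = φ' S) → φ R = x → φ' R = y →
        ¬ (StrategyProof Rs φ ∧ StrategyProof Rs φ')) ∧
    (∀ R ∈ Rs, ∀ x y : X, x ∈ Ann R → y ∈ Ann R → x = y) := by
  classical
  have hdistinct : ∀ R ∈ Rs, ∀ x y : X, x ∈ Ann R → y ∈ Ann R → x ≠ y →
      ∀ φ φ' : (I → X → X → Prop) → X,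
        (∀ S ∈ Rs, φ S ∈ Ann S) → (∀ S ∈ Rs, φ' S ∈ Ann S) →
        (∀ S ∈ Rs, S ≠ R → φ S = φ' S) → φ R = x → φ' R = y →
        ¬ (StrategyProof Rs φ ∧ StrategyProof Rs φ') := by
    rintro R hR x y - - hxy φ φ' - - hagree rfl rfl ⟨hφ, hφ'⟩
    exact hxy (apply_eq_of_strategyProof hrich hR (fun i => (hpref R hR i).1)
      (hnoindiff R hR) hagree hφ hφ')
  refine ⟨hdistinct, fun R hR x y hx hy => by_contra fun hxy => ?_⟩
  have : Nonempty X := ⟨x⟩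
  obtain ⟨ψ, hψ⟩ := exists_forall_mem_announcement hne
  have hφ := forall_mem_announcement_update hψ hx
  have hφ' := forall_mem_announcement_update hψ hy
  exact hdistinct R hR x y hx hy hxy _ _ hφ hφ'
    (fun S _ hSR => by simp [Function.update_of_ne hSR]) (by simp) (by simp)
    ⟨hguar _ hφ, hguar _ hφ'⟩

/-- if `Π` guarantees strategy-proofness on a rich domain with no
completely-indifferent pair of outcomes, then two possible mechanisms agreeing
outside a problem `R` and picking distinct `x, y ∈ Π(R)` at `R` cannot both be
strategy-proof; hence `Π(R)` is a singleton for every `R`. -/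
theorem stmt17 {I X : Type} [DecidableEq I] [Fintype I] [Fintype X]
    (Rs : Set (I → X → X → Prop))
    (hrich : Rich Rs)
    (hpref : ∀ R ∈ Rs, ∀ i : I, Transitive (R i) ∧ Total (R i))
    (hnoindiff : ∀ R ∈ Rs, ∀ x y : X, x ≠ y →
      ∃ i : I, strictPref (R i) x y ∨ strictPref (R i) y x)
    (Ann : (I → X → X → Prop) → Set X)
    (hne : ∀ R ∈ Rs, (Ann R).Nonempty)
    (hguar : ∀ φ : (I → X → X → Prop) → X,
      (∀ R ∈ Rs, φ R ∈ Ann R) → StrategyProof Rs φ) :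
    (∀ R ∈ Rs, ∀ x y : X, x ∈ Ann R → y ∈ Ann R → x ≠ y →
      ∀ φ φ' : (I → X → X → Prop) → X,
        (∀ S ∈ Rs, φ S ∈ Ann S) → (∀ S ∈ Rs, φ' S ∈ Ann S) →
        (∀ S ∈ Rs, S ≠ R → φ S = φ' S) → φ R = x → φ' R = y →
        ¬ (StrategyProof Rs φ ∧ StrategyProof Rs φ')) ∧
    (∀ R ∈ Rs, ∀ x y : X, x ∈ Ann R → y ∈ Ann R → x = y) :=
  stmt17_general Rs hrich hpref hnoindiff Ann hne hguar
end
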